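/- The unit group of Z[ζ₅] is generated by -1, ζ₅ and ζ₅ + 1 (equivalently, modulo roots of unity it is generated by the fundamental unit ζ₅ + 1, the unit rank being 1). -/

import Mathlib

/-!
By Dirichlet's unit theorem every unit of `K = ℚ(ζ₅)` is `t * ε ^ m` with `t` a root of unity,
hence `t = ±ζ ^ r`, and `ε` a fixed fundamental unit; so it suffices that `v = 1 + ζ` is such a
product only for `m = ±1`. Every conjugate `W = |σ v|²` satisfies `W + W⁻¹ = 3`, which rules out
`m = 0` and, for `|m| ≥ 2`, forces `a + a⁻¹ ≤ √5` for every `a = |σ ε|²`. But, `c` being complex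
conjugation, the algebraic integer `ε c(ε) + ε⁻¹ c(ε⁻¹)` has trace `∑ σ, (a_σ + a_σ⁻¹)`, an
integer in `[8, 4√5] ⊂ [8, 9)`. So all `a_σ = 1` and `ε` is a root of unity by Kronecker's theorem,
a contradiction.
-/

open Module NumberField NumberField.Units

lemma two_le_add_inv {a : ℝ} (ha : 0 < a) : 2 ≤ a + a⁻¹ := by
  have : a + a⁻¹ - 2 = (a - 1) ^ 2 / a := by field_simp; ring
  linarith [div_nonneg (sq_nonneg (a - 1)) ha.le]

lemma eq_one_of_add_inv_eq_two {a : ℝ} (ha : 0 < a) (h : a + a⁻¹ = 2) : a = 1 := by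
  have : (a - 1) ^ 2 / a = a + a⁻¹ - 2 := by field_simp; ring
  simpa [h, ha.ne', sub_eq_zero] using this

lemma eq_of_intCast_eq_sum_of_le_of_lt {ι : Type*} [Fintype ι] {f : ι → ℝ} {c : ℤ}
    (hf : ∀ i, c ≤ f i) (hf' : ∀ i, f i < c + (Fintype.card ι : ℝ)⁻¹) {n : ℤ}
    (hn : (n : ℝ) = ∑ i, f i) (i : ι) : f i = c := by
  have : Nonempty ι := ⟨i⟩
  have hk : ((n - Fintype.card ι * c : ℤ) : ℝ) = ∑ j, (f j - c) := by
    simp [Finset.sum_sub_distrib, hn]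
  have hk0 : (0 : ℝ) ≤ (n - Fintype.card ι * c : ℤ) :=
    hk ▸ Finset.sum_nonneg fun j _ => sub_nonneg.2 (hf j)
  have hk1 : ((n - Fintype.card ι * c : ℤ) : ℝ) < 1 := by
    calc _ < ∑ _j : ι, (Fintype.card ι : ℝ)⁻¹ :=
          hk ▸ Finset.sum_lt_sum_of_nonempty Finset.univ_nonempty fun j _ => by linarith [hf' j]
      _ = 1 := by simp
  have hsum : ∑ j, (f j - c) = 0 := by
    have h0 : 0 ≤ n - Fintype.card ι * c := by exact_mod_cast hk0
    have h1 : n - Fintype.card ι * c < 1 := by exact_mod_cast hk1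
    rw [← hk, show n - Fintype.card ι * c = 0 by omega, Int.cast_zero]
  exact sub_eq_zero.1 <| (Finset.sum_eq_zero_iff_of_nonneg fun j _ => sub_nonneg.2 (hf j)).1
    hsum i (Finset.mem_univ i)

lemma sq_add_inv_sq_le_pow_add_inv_pow {y : ℝ} (hy : 0 < y) {k : ℕ} (hk : 2 ≤ k) :
    y ^ 2 + (y ^ 2)⁻¹ ≤ y ^ k + (y ^ k)⁻¹ := by
  obtain ⟨j, rfl⟩ := Nat.exists_eq_add_of_le' hk
  have hnum : 0 ≤ (y ^ (j + 4) - 1) * (y ^ j - 1) := by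
    rcases le_total 1 y with h | h
    · exact mul_nonneg (sub_nonneg.2 (one_le_pow₀ h)) (sub_nonneg.2 (one_le_pow₀ h))
    · exact mul_nonneg_of_nonpos_of_nonpos (sub_nonpos.2 (pow_le_one₀ hy.le h))
        (sub_nonpos.2 (pow_le_one₀ hy.le h))
  have hdiff : y ^ (j + 2) + (y ^ (j + 2))⁻¹ - (y ^ 2 + (y ^ 2)⁻¹) =
      (y ^ (j + 4) - 1) * (y ^ j - 1) / y ^ (j + 2) := by
    field_simp
    ring
  linarith [div_nonneg hnum (pow_pos hy (j + 2)).le]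

lemma sq_add_inv_sq_le_zpow_add_inv_zpow {y : ℝ} (hy : 0 < y) {m : ℤ} (hm : 2 ≤ m.natAbs) :
    y ^ 2 + (y ^ 2)⁻¹ ≤ y ^ m + (y ^ m)⁻¹ := by
  obtain ⟨k, rfl | rfl⟩ := Int.eq_nat_or_neg m
  · simpa using sq_add_inv_sq_le_pow_add_inv_pow hy (by simpa using hm)
  · simpa [add_comm] using sq_add_inv_sq_le_pow_add_inv_pow hy (by simpa using hm)

lemma add_inv_le_sqrt_five_of_zpow_add_inv_eq_three {y : ℝ} (hy : 0 < y) {m : ℤ}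
    (hm : 2 ≤ m.natAbs) (h : y ^ m + (y ^ m)⁻¹ = 3) : y + y⁻¹ ≤ √5 := by
  have hsq : (y + y⁻¹) ^ 2 = y ^ 2 + (y ^ 2)⁻¹ + 2 := by
    field_simp
    ring
  have := sq_add_inv_sq_le_zpow_add_inv_zpow hy hm
  exact Real.le_sqrt_of_sq_le (by linarith)

lemma IsPrimitiveRoot.sq_norm_one_add_add_inv {z : ℂ} (hz : IsPrimitiveRoot z 5) :
    ‖1 + z‖ ^ 2 + (‖1 + z‖ ^ 2)⁻¹ = 3 := by
  have hz5 : z ^ 5 = 1 := hz.pow_eq_one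
  have hgeom : 1 + z + z ^ 2 + z ^ 3 + z ^ 4 = 0 := by
    simpa [Finset.sum_range_succ, add_assoc] using hz.geom_sum_eq_zero (by norm_num)
  have hconj : starRingEnd ℂ z = z ^ 4 := by
    rw [← Complex.inv_eq_conj (Complex.norm_eq_one_of_pow_eq_one hz5 (by norm_num))]
    exact inv_eq_of_mul_eq_one_right (by linear_combination hz5)
  set W := ‖1 + z‖ ^ 2
  have hW : (W : ℂ) = 2 + z + z ^ 4 := by
    rw [Complex.ofReal_pow, ← Complex.mul_conj', map_add, map_one, hconj]
    linear_combination hz5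
  have hquad : W ^ 2 - 3 * W + 1 = 0 := by
    have : (W : ℂ) ^ 2 - 3 * W + 1 = 0 := by
      rw [hW]
      linear_combination (z ^ 3 + 2) * hz5 + hgeom
    exact_mod_cast this
  have hW0 : W ≠ 0 := by
    rintro h
    simp [h] at hquad
  field_simp
  linarith

namespace NumberField.Units

variable {K : Type*} [Field K] [NumberField K]

lemma norm_embedding_eq_one_of_mem_torsion {x : (𝓞 K)ˣ} (hx : x ∈ torsion K) (φ : K →+* ℂ) :
    ‖φ x‖ = 1 :=
  (mem_torsion K).mp hx (InfinitePlace.mk φ)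

lemma mem_torsion_of_forall_norm_embedding_eq_one {x : (𝓞 K)ˣ} (hx : ∀ φ : K →+* ℂ, ‖φ x‖ = 1) :
    x ∈ torsion K :=
  (mem_torsion K).mpr fun w => by rw [← w.norm_embedding_eq]; exact hx _

lemma eq_top_of_torsion_le_of_forall_fundSystem_mem {S : Subgroup (𝓞 K)ˣ} (hT : torsion K ≤ S)
    (hS : ∀ i, fundSystem K i ∈ S) : S = ⊤ := by
  rw [eq_top_iff, ← closure_fundSystem_sup_torsion_eq_top]
  exact sup_le ((Subgroup.closure_le S).2 (Set.range_subset_iff.2 hS)) hT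

lemma exists_eq_mul_zpow_fundSystem (h : rank K = 1) (x : (𝓞 K)ˣ) (i : Fin (rank K)) :
    ∃ t ∈ torsion K, ∃ m : ℤ, x = t * fundSystem K i ^ m := by
  have : Subsingleton (Fin (rank K)) := by rw [h]; infer_instance
  obtain ⟨⟨t, e⟩, hx, -⟩ := exist_unique_eq_mul_prod K x
  exact ⟨t, t.2, e i, by rw [hx, Fintype.prod_subsingleton _ i]⟩

end NumberField.Units

namespace NumberField.IsCMField

variable {K : Type*} [Field K] [NumberField K] [IsCMField K]

theorem exists_int_eq_sum_sq_norm_add_inv (x : (𝓞 K)ˣ) :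
    ∃ n : ℤ, (n : ℝ) = ∑ φ : K →+* ℂ, (‖φ x‖ ^ 2 + (‖φ x‖ ^ 2)⁻¹) := by
  set α := x * unitsComplexConj K x
  set y : K := (α : K) + ((α⁻¹ : (𝓞 K)ˣ) : K)
  have hy : IsIntegral ℤ y :=
    (α : 𝓞 K).isIntegral_coe.add ((α⁻¹ : (𝓞 K)ˣ) : 𝓞 K).isIntegral_coe
  obtain ⟨n, hn⟩ := IsIntegrallyClosed.isIntegral_iff.mp
    (Algebra.isIntegral_trace (L := ℚ) hy)
  have hφ (φ : K →+* ℂ) : φ y = ((‖φ x‖ ^ 2 + (‖φ x‖ ^ 2)⁻¹ : ℝ) : ℂ) := by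
    simp only [y, α, map_add]
    simp [RingOfIntegers.coe_eq_algebraMap, map_inv₀]
    rw [← mul_inv, Complex.conj_mul', Complex.mul_conj']
  refine ⟨n, Complex.ofReal_injective ?_⟩
  have htr := trace_eq_sum_embeddings ℂ (K := ℚ) (x := y)
  rw [← hn, ← Fintype.sum_equiv (RingHom.equivRatAlgHom K ℂ) (fun φ => φ y) _ (fun _ => rfl)]
    at htr
  simpa [hφ] using htr

theorem mem_torsion_of_forall_sq_norm_add_inv_lt (x : (𝓞 K)ˣ)
    (h : ∀ φ : K →+* ℂ, ‖φ x‖ ^ 2 + (‖φ x‖ ^ 2)⁻¹ < 2 + (finrank ℚ K : ℝ)⁻¹) :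
    x ∈ torsion K := by
  have hpos (φ : K →+* ℂ) : 0 < ‖φ x‖ ^ 2 := by simp
  obtain ⟨n, hn⟩ := exists_int_eq_sum_sq_norm_add_inv x
  refine mem_torsion_of_forall_norm_embedding_eq_one fun φ => ?_
  have h2 := eq_of_intCast_eq_sum_of_le_of_lt (c := 2)
    (by simpa using fun φ => two_le_add_inv (hpos φ)) (by simpa [Embeddings.card] using h) hn φ
  exact (pow_eq_one_iff_of_nonneg (norm_nonneg _) two_ne_zero).1
    (eq_one_of_add_inv_eq_two (hpos φ) (by exact_mod_cast h2))

theorem eq_one_or_neg_one_of_eq_mul_zpow (hK : finrank ℚ K ≤ 4) {v : (𝓞 K)ˣ}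
    (hv : ∀ φ : K →+* ℂ, ‖φ v‖ ^ 2 + (‖φ v‖ ^ 2)⁻¹ = 3) {t ε : (𝓞 K)ˣ} (ht : t ∈ torsion K)
    {m : ℤ} (h : v = t * ε ^ m) : m = 1 ∨ m = -1 := by
  have hvε (φ : K →+* ℂ) : ‖φ v‖ ^ 2 = (‖φ ε‖ ^ 2) ^ m := by
    rw [h]
    simp only [coe_mul, coe_zpow, map_mul, map_zpow₀, norm_mul, norm_zpow,
      norm_embedding_eq_one_of_mem_torsion ht φ, one_mul]
    rw [← zpow_natCast, ← zpow_natCast, ← zpow_mul, ← zpow_mul, mul_comm]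
  have hpos (φ : K →+* ℂ) : 0 < ‖φ ε‖ ^ 2 := by simp
  obtain ⟨φ₀⟩ : Nonempty (K →+* ℂ) := inferInstance
  have hne : (‖φ₀ ε‖ ^ 2) ^ m ≠ 1 := fun h1 => by
    have := hv φ₀
    rw [hvε, h1] at this
    norm_num at this
  have hm0 : m ≠ 0 := by
    rintro rfl
    exact hne (zpow_zero _)
  by_contra hm
  have hε : ε ∈ torsion K := by
    refine mem_torsion_of_forall_sq_norm_add_inv_lt ε fun φ => ?_
    have hsqrt : √5 < 2 + 4⁻¹ := (Real.sqrt_lt' (by norm_num)).2 (by norm_num)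
    have hinv : (4 : ℝ)⁻¹ ≤ (finrank ℚ K : ℝ)⁻¹ :=
      inv_anti₀ (by exact_mod_cast finrank_pos) (by exact_mod_cast hK)
    have := add_inv_le_sqrt_five_of_zpow_add_inv_eq_three (hpos φ) (by omega) (hvε φ ▸ hv φ)
    linarith
  exact hne (by simp [norm_embedding_eq_one_of_mem_torsion hε φ₀])

end NumberField.IsCMField

namespace IsCyclotomicExtension.Rat

variable {K : Type*} [Field K] [NumberField K]

lemma units_rank_eq (n : ℕ) [NeZero n] [IsCyclotomicExtension {n} ℚ K] (hn : 2 < n) :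
    rank K = n.totient / 2 - 1 := by
  rw [rank, InfinitePlace.card_eq_nrRealPlaces_add_nrComplexPlaces, nrRealPlaces_eq_zero K hn,
    zero_add, nrComplexPlaces_eq_totient_div_two n]

lemma torsion_le_closure_neg_one_insert {n : ℕ} [NeZero n] [IsCyclotomicExtension {n} ℚ K]
    (hn : Odd n) {u : (𝓞 K)ˣ} (hu : IsPrimitiveRoot (u : 𝓞 K) n) :
    torsion K ≤ Subgroup.closure {-1, u} := by
  intro x hx
  have hxK : IsOfFinOrder (x : K) :=
    ((algebraMap (𝓞 K) K).toMonoidHom.comp (Units.coeHom _)).isOfFinOrder hx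
  obtain ⟨r, -, hr | hr⟩ := (hu.map_of_injective RingOfIntegers.coe_injective
    (f := algebraMap (𝓞 K) K)).exists_pow_or_neg_mul_pow_of_isOfFinOrder hn hxK
  · have : x = u ^ r := coe_injective K (by simpa using hr)
    exact this ▸ pow_mem (Subgroup.subset_closure (by simp)) r
  · have : x = -1 * u ^ r := coe_injective K (by simpa using hr)
    exact this ▸ mul_mem (Subgroup.subset_closure (by simp))
      (pow_mem (Subgroup.subset_closure (by simp)) r)

end IsCyclotomicExtension.Rat

/-- The unit group of `ℤ[ζ₅]` is generated by `-1`, `ζ₅` and `ζ₅ + 1`. -/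
theorem stmt_5 (K : Type) [Field K] [NumberField K] [IsCyclotomicExtension {5} ℚ K]
    (ζ : 𝓞 K) (hζ : IsPrimitiveRoot ζ 5)
    (u v : (𝓞 K)ˣ) (hu : (u : 𝓞 K) = ζ) (hv : (v : 𝓞 K) = ζ + 1) :
    Subgroup.closure ({-1, u, v} : Set (𝓞 K)ˣ) = ⊤ := by
  have : IsCMField K := IsCyclotomicExtension.Rat.isCMField K (S := {5}) ⟨5, rfl, by norm_num⟩
  set S := Subgroup.closure ({-1, u, v} : Set (𝓞 K)ˣ)
  have hT : torsion K ≤ S :=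
    (IsCyclotomicExtension.Rat.torsion_le_closure_neg_one_insert (by decide) (hu ▸ hζ)).trans
      (Subgroup.closure_mono (by simp [Set.insert_subset_iff]))
  have hrank : rank K = 1 := IsCyclotomicExtension.Rat.units_rank_eq 5 (by norm_num)
  have hd : finrank ℚ K ≤ 4 := (IsCyclotomicExtension.Rat.finrank 5 K).le
  have hv3 (φ : K →+* ℂ) : ‖φ v‖ ^ 2 + (‖φ v‖ ^ 2)⁻¹ = 3 := by
    have := ((hζ.map_of_injective RingOfIntegers.coe_injective).map_of_injective
      φ.injective).sq_norm_one_add_add_inv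
    simpa [hv, add_comm] using this
  refine eq_top_of_torsion_le_of_forall_fundSystem_mem hT fun i => ?_
  obtain ⟨t, ht, m, hvm⟩ := exists_eq_mul_zpow_fundSystem hrank v i
  have hε : fundSystem K i = (t⁻¹ * v) ^ m := by
    rcases IsCMField.eq_one_or_neg_one_of_eq_mul_zpow hd hv3 ht hvm with rfl | rfl <;> simp [hvm]
  exact hε ▸ zpow_mem (mul_mem (inv_mem (hT ht)) (Subgroup.subset_closure (by simp))) m
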